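/- If Ξ_b = diag(Ξ₁,…,Ξ_k) certifies passivity of each subsystem block-wise (each Ξ_j = Ξ_jᵀ ≻ 0 satisfies the positive real LMI for (A_j,B_j,C_j,D_j)), S ⪰ 0, and I+SD_b invertible with D_b = diag(D₁,…,D_k), then for the closed-loop interconnected system with external input matrix ℬ, for all states x_b and inputs u_c, d/dt(x_bᵀΞ_bx_b) ≤ 2 y_cᵀu_c − 2 z_bᵀS z_b ≤ 2 y_cᵀu_c along trajectories, where z_b is the internal output and y_c = ℬᵀz_b. -/

import Mathlib

/-!
Write `v_b = 𝓑 u_c - S z_b` for the internal input. Since `I + D_b S` is invertible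
(equivalently `I + S D_b`, by the Weinstein–Aronszajn identity), the closed loop satisfies
`z_b = C_b x_b + D_b v_b` and `ẋ_b = A_b x_b + B_b v_b`: it is the block-diagonal open-loop
system driven by `v_b`. Summing the block LMIs, each evaluated at `(x_j, v_j)`, gives
`x_bᵀ Ξ_b ẋ_b ≤ z_bᵀ v_b`, and `z_bᵀ v_b = y_cᵀ u_c - z_bᵀ S z_b ≤ y_cᵀ u_c` because `S ⪰ 0`.
-/

open Matrix

def NegSemidef {m : Type*} [Fintype m] (M : Matrix m m ℝ) : Prop :=
  ∀ z : m → ℝ, z ⬝ᵥ (M *ᵥ z) ≤ 0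

section Passivity

variable {m n : Type*} [Fintype m] [Fintype n]

theorem dotProduct_mulVec_le_of_negSemidef_fromBlocks {A Ξ : Matrix n n ℝ} {B : Matrix n m ℝ}
    {C : Matrix m n ℝ} {D : Matrix m m ℝ} (hΞ : Ξ.IsSymm)
    (hLMI : NegSemidef (fromBlocks (Aᵀ * Ξ + Ξ * A) (Ξ * B - Cᵀ) (Bᵀ * Ξ - C) (-(D + Dᵀ))))
    (x : n → ℝ) (v : m → ℝ) :
    x ⬝ᵥ (Ξ *ᵥ (A *ᵥ x + B *ᵥ v)) ≤ (C *ᵥ x + D *ᵥ v) ⬝ᵥ v := by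
  have h := hLMI (Sum.elim x v)
  simp only [fromBlocks_mulVec, sumElim_dotProduct_sumElim, Sum.elim_comp_inl, Sum.elim_comp_inr,
    add_mulVec, sub_mulVec, neg_mulVec, dotProduct_add, dotProduct_sub, dotProduct_neg,
    ← mulVec_mulVec, dotProduct_transpose_mulVec] at h
  have hsymm (y : n → ℝ) : y ⬝ᵥ Ξ *ᵥ x = x ⬝ᵥ Ξ *ᵥ y := by
    rw [← dotProduct_transpose_mulVec, hΞ.eq]
  rw [dotProduct_comm (Ξ *ᵥ x) (A *ᵥ x), dotProduct_comm (Ξ *ᵥ x) (B *ᵥ v), hsymm, hsymm,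
    dotProduct_comm v (C *ᵥ x), dotProduct_comm v (D *ᵥ v)] at h
  simp only [mulVec_add, dotProduct_add, add_dotProduct]
  linarith

end Passivity

section BlockDiagonal

variable {o : Type*} [Fintype o] {m n : o → Type*}

theorem dotProduct_sigma [∀ i, Fintype (m i)] (x y : (Σ i, m i) → ℝ) :
    x ⬝ᵥ y = ∑ i, (fun a => x ⟨i, a⟩) ⬝ᵥ (fun a => y ⟨i, a⟩) := by
  simp only [dotProduct, ← Finset.univ_sigma_univ, Finset.sum_sigma]

theorem blockDiagonal'_mulVec_apply [DecidableEq o] [∀ i, Fintype (n i)]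
    (M : ∀ i, Matrix (m i) (n i) ℝ) (y : (Σ i, n i) → ℝ) (i : o) (a : m i) :
    (blockDiagonal' M *ᵥ y) ⟨i, a⟩ = (M i *ᵥ fun b => y ⟨i, b⟩) a := by
  simp only [mulVec, dotProduct, ← Finset.univ_sigma_univ, Finset.sum_sigma]
  rw [Finset.sum_eq_single i]
  · simp [blockDiagonal'_apply_eq]
  · intro j _ hj
    exact Finset.sum_eq_zero fun b _ => by rw [blockDiagonal'_apply_ne _ _ _ hj.symm, zero_mul]
  · simp

end BlockDiagonal

theorem blockDiagonal'_dotProduct_mulVec_le_of_negSemidef_fromBlocks {o : Type*} [Fintype o]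
    [DecidableEq o] {n p : o → Type*} [∀ i, Fintype (n i)] [∀ i, Fintype (p i)]
    {A Ξ : ∀ i, Matrix (n i) (n i) ℝ} {B : ∀ i, Matrix (n i) (p i) ℝ}
    {C : ∀ i, Matrix (p i) (n i) ℝ} {D : ∀ i, Matrix (p i) (p i) ℝ} (hΞ : ∀ i, (Ξ i).IsSymm)
    (hLMI : ∀ i, NegSemidef (fromBlocks ((A i)ᵀ * Ξ i + Ξ i * A i) (Ξ i * B i - (C i)ᵀ)
      ((B i)ᵀ * Ξ i - C i) (-(D i + (D i)ᵀ))))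
    (x : (Σ i, n i) → ℝ) (v : (Σ i, p i) → ℝ) :
    x ⬝ᵥ (blockDiagonal' Ξ *ᵥ (blockDiagonal' A *ᵥ x + blockDiagonal' B *ᵥ v))
      ≤ (blockDiagonal' C *ᵥ x + blockDiagonal' D *ᵥ v) ⬝ᵥ v := by
  simp only [dotProduct_sigma x, dotProduct_sigma _ v, Pi.add_apply,
    blockDiagonal'_mulVec_apply]
  exact Finset.sum_le_sum fun i _ =>
    dotProduct_mulVec_le_of_negSemidef_fromBlocks (hΞ i) (hLMI i) _ _

section ClosedLoop

variable {n p q : Type*} [Fintype n] [Fintype p] [Fintype q] [DecidableEq p]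
  {A : Matrix n n ℝ} {B : Matrix n p ℝ} {C : Matrix p n ℝ} {D S : Matrix p p ℝ}
  {𝓑 : Matrix p q ℝ}

theorem closedLoop_output_eq (hDS : IsUnit (1 + D * S)) {x : n → ℝ} {u : q → ℝ} {z : p → ℝ}
    (hz : z = (1 + D * S)⁻¹ *ᵥ (C *ᵥ x + D *ᵥ (𝓑 *ᵥ u))) :
    z = C *ᵥ x + D *ᵥ (𝓑 *ᵥ u - S *ᵥ z) := by
  have : (1 + D * S) *ᵥ z = C *ᵥ x + D *ᵥ (𝓑 *ᵥ u) := by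
    rw [hz, mulVec_mulVec, mul_nonsing_inv _ ((isUnit_iff_isUnit_det _).mp hDS), one_mulVec]
  rw [add_mulVec, one_mulVec, ← mulVec_mulVec] at this
  rw [mulVec_sub]
  linear_combination (norm := module) this

theorem closedLoop_state_eq (hSD : IsUnit (1 + S * D)) {x : n → ℝ} {u : q → ℝ} {z : p → ℝ}
    (hz : z = C *ᵥ x + D *ᵥ (𝓑 *ᵥ u - S *ᵥ z)) :
    (A - B * (1 + S * D)⁻¹ * S * C) *ᵥ x + (B * (1 + S * D)⁻¹ * 𝓑) *ᵥ u
      = A *ᵥ x + B *ᵥ (𝓑 *ᵥ u - S *ᵥ z) := by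
  set v := 𝓑 *ᵥ u - S *ᵥ z with hv_def
  have hDv : D *ᵥ v = z - C *ᵥ x := by rw [hz]; abel
  have hv : (1 + S * D) *ᵥ v = 𝓑 *ᵥ u - S *ᵥ (C *ᵥ x) := by
    rw [add_mulVec, one_mulVec, ← mulVec_mulVec, hDv, mulVec_sub, hv_def]
    abel
  have hv' : v = (1 + S * D)⁻¹ *ᵥ (𝓑 *ᵥ u - S *ᵥ (C *ᵥ x)) := by
    rw [← hv, mulVec_mulVec, nonsing_inv_mul _ ((isUnit_iff_isUnit_det _).mp hSD), one_mulVec]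
  rw [hv']
  simp only [sub_mulVec, ← mulVec_mulVec, mulVec_sub]
  abel

end ClosedLoop

theorem stmt14_general {k pc : ℕ} (n p : Fin k → ℕ)
    (A : ∀ j, Matrix (Fin (n j)) (Fin (n j)) ℝ)
    (B : ∀ j, Matrix (Fin (n j)) (Fin (p j)) ℝ)
    (C : ∀ j, Matrix (Fin (p j)) (Fin (n j)) ℝ)
    (D : ∀ j, Matrix (Fin (p j)) (Fin (p j)) ℝ)
    (Ξ : ∀ j, Matrix (Fin (n j)) (Fin (n j)) ℝ)
    (hΞ : ∀ j, (Ξ j).PosDef)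
    (hLMI : ∀ j, NegSemidef
      (fromBlocks ((A j)ᵀ * Ξ j + Ξ j * A j) (Ξ j * B j - (C j)ᵀ)
        ((B j)ᵀ * Ξ j - C j) (-(D j + (D j)ᵀ))))
    (S : Matrix (Σ j, Fin (p j)) (Σ j, Fin (p j)) ℝ) (hS : S.PosSemidef)
    (𝓑 : Matrix (Σ j, Fin (p j)) (Fin pc) ℝ)
    (hSD : IsUnit (1 + S * blockDiagonal' D)) :
    ∀ (x : (Σ j, Fin (n j)) → ℝ) (uc : Fin pc → ℝ),
      let Ab := blockDiagonal' A
      let Bb := blockDiagonal' B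
      let Cb := blockDiagonal' C
      let Db := blockDiagonal' D
      let Ξb := blockDiagonal' Ξ
      let Ac := Ab - Bb * (1 + S * Db)⁻¹ * S * Cb
      let Bc := Bb * (1 + S * Db)⁻¹ * 𝓑
      let zb := (1 + Db * S)⁻¹ *ᵥ (Cb *ᵥ x + Db *ᵥ (𝓑 *ᵥ uc))
      let yc := 𝓑ᵀ *ᵥ zb
      2 * (x ⬝ᵥ (Ξb *ᵥ (Ac *ᵥ x + Bc *ᵥ uc)))
          ≤ 2 * (yc ⬝ᵥ uc) - 2 * (zb ⬝ᵥ (S *ᵥ zb)) ∧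
      2 * (x ⬝ᵥ (Ξb *ᵥ (Ac *ᵥ x + Bc *ᵥ uc))) ≤ 2 * (yc ⬝ᵥ uc) := by
  intro x uc Ab Bb Cb Db Ξb Ac Bc zb yc
  have hDS : IsUnit (1 + Db * S) := by
    rw [isUnit_iff_isUnit_det, det_one_add_mul_comm, ← isUnit_iff_isUnit_det]
    exact hSD
  have hz : zb = Cb *ᵥ x + Db *ᵥ (𝓑 *ᵥ uc - S *ᵥ zb) := closedLoop_output_eq hDS rfl
  have hΞ_symm j : (Ξ j).IsSymm := isHermitian_iff_isSymm.mp (hΞ j).isHermitian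
  have hstorage := blockDiagonal'_dotProduct_mulVec_le_of_negSemidef_fromBlocks hΞ_symm hLMI x
    (𝓑 *ᵥ uc - S *ᵥ zb)
  rw [← hz, ← closedLoop_state_eq hSD hz] at hstorage
  have hsupply : zb ⬝ᵥ (𝓑 *ᵥ uc - S *ᵥ zb) = yc ⬝ᵥ uc - zb ⬝ᵥ (S *ᵥ zb) := by
    rw [dotProduct_sub, dotProduct_mulVec, ← mulVec_transpose]
  have hSz : 0 ≤ zb ⬝ᵥ (S *ᵥ zb) := by simpa using hS.dotProduct_mulVec_nonneg zb
  constructor <;> linarith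

/-- if block-diagonal `Ξ_b = diag(Ξ₁,…,Ξ_k)` certifies passivity of
each subsystem, `S ⪰ 0` and `I + S D_b` is invertible, then along closed-loop
trajectories `d/dt (x_bᵀ Ξ_b x_b) ≤ 2 y_cᵀ u_c − 2 z_bᵀ S z_b ≤ 2 y_cᵀ u_c`,
where `z_b = (I + D_b S)⁻¹ (C_b x_b + D_b 𝓑 u_c)` and `y_c = 𝓑ᵀ z_b`. -/
theorem stmt14 {k pc : ℕ} (n p : Fin k → ℕ)
    (A : ∀ j, Matrix (Fin (n j)) (Fin (n j)) ℝ)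
    (B : ∀ j, Matrix (Fin (n j)) (Fin (p j)) ℝ)
    (C : ∀ j, Matrix (Fin (p j)) (Fin (n j)) ℝ)
    (D : ∀ j, Matrix (Fin (p j)) (Fin (p j)) ℝ)
    (Ξ : ∀ j, Matrix (Fin (n j)) (Fin (n j)) ℝ)
    (hΞ : ∀ j, (Ξ j).PosDef)
    (hLMI : ∀ j, NegSemidef
      (fromBlocks ((A j)ᵀ * Ξ j + Ξ j * A j) (Ξ j * B j - (C j)ᵀ)
        ((B j)ᵀ * Ξ j - C j) (-(D j + (D j)ᵀ))))
    (S : Matrix (Σ j, Fin (p j)) (Σ j, Fin (p j)) ℝ) (hS : S.PosSemidef)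
    (𝓑 : Matrix (Σ j, Fin (p j)) (Fin pc) ℝ)
    (hSD : IsUnit (1 + S * blockDiagonal' D))
    (hDS : IsUnit (1 + blockDiagonal' D * S)) :
    ∀ (x : (Σ j, Fin (n j)) → ℝ) (uc : Fin pc → ℝ),
      let Ab := blockDiagonal' A
      let Bb := blockDiagonal' B
      let Cb := blockDiagonal' C
      let Db := blockDiagonal' D
      let Ξb := blockDiagonal' Ξ
      let Ac := Ab - Bb * (1 + S * Db)⁻¹ * S * Cb
      let Bc := Bb * (1 + S * Db)⁻¹ * 𝓑
      let zb := (1 + Db * S)⁻¹ *ᵥ (Cb *ᵥ x + Db *ᵥ (𝓑 *ᵥ uc))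
      let yc := 𝓑ᵀ *ᵥ zb
      2 * (x ⬝ᵥ (Ξb *ᵥ (Ac *ᵥ x + Bc *ᵥ uc)))
          ≤ 2 * (yc ⬝ᵥ uc) - 2 * (zb ⬝ᵥ (S *ᵥ zb)) ∧
      2 * (x ⬝ᵥ (Ξb *ᵥ (Ac *ᵥ x + Bc *ᵥ uc))) ≤ 2 * (yc ⬝ᵥ uc) :=
  stmt14_general n p A B C D Ξ hΞ hLMI S hS 𝓑 hSD
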